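/- arXiv:1212.3465 — 6 statements merged into one kernel-verified Lean document; each statement's English description precedes it below -/
import Mathlib

section
/- Let λ₁, …, λ_k be finitely many nonzero complex numbers. Then there exists a positive integer N such that Re(λ_j^N) > 0 for every j = 1, …, k. -/
/-!
Write `λⱼ = ‖λⱼ‖ e^{i θⱼ}`. In the compact group `(S¹)ᵏ`, `1` is a cluster point of the powers
of any element, so infinitely many powers of `(e^{i θⱼ})ⱼ` lie in the open neighbourhood
`{Re > 0}ᵏ` of `1`; the positive factors `‖λⱼ‖ᴺ` do not change the sign of the real parts.
-/

open Filter Set Topology Complex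

theorem Complex.re_pow_eq_norm_pow_mul (z : ℂ) (n : ℕ) :
    (z ^ n).re = ‖z‖ ^ n * ((Circle.exp (arg z) ^ n : Circle) : ℂ).re := by
  conv_lhs => rw [← norm_mul_exp_arg_mul_I z]
  rw [mul_pow, ← ofReal_pow, re_ofReal_mul, Circle.coe_pow, Circle.coe_exp]

theorem Circle.isOpen_setOf_re_pos : IsOpen {z : Circle | 0 < (z : ℂ).re} :=
  isOpen_lt continuous_const (continuous_re.comp continuous_subtype_val)

/-- Diophantine approximation lemma: given finitely many nonzero complex numbers
`λ₁, …, λ_k`, there is a positive integer `N` with `Re(λ_j ^ N) > 0` for all `j`. -/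
theorem exists_pow_re_pos (k : ℕ) (lam : Fin k → ℂ) (hlam : ∀ j, lam j ≠ 0) :
    ∃ N : ℕ, 0 < N ∧ ∀ j, 0 < (lam j ^ N).re := by
  have hU : (univ.pi fun _ ↦ {z : Circle | 0 < (z : ℂ).re}) ∈ 𝓝 (1 : Fin k → Circle) :=
    set_pi_mem_nhds finite_univ fun _ _ ↦ Circle.isOpen_setOf_re_pos.mem_nhds (by simp)
  obtain ⟨N, hpow, hN⟩ :=
    (((mapClusterPt_one_atTop_pow fun j ↦ Circle.exp (arg (lam j))).frequently hU).and_eventually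
      (eventually_gt_atTop 0)).exists
  refine ⟨N, hN, fun j ↦ ?_⟩
  rw [re_pow_eq_norm_pow_mul]
  exact mul_pos (pow_pos (norm_pos_iff.2 (hlam j)) N) (hpow j (mem_univ j))
end

section
/- Let d > 0 be a real number, k an integer, and λ₁, …, λ_t nonzero complex numbers. If ∑_{j=1}^t Re(λ_j^n) ≤ (2 − k)·d^n − 1 for every integer n ≥ 1, then k ≤ 1. -/
/-!
Writing `λ_j = |λ_j| u_j` with `u_j` on the unit circle, recurrence in the compact group
`(S¹)ᵗ` gives an `n ≥ 1` with every `u_jⁿ` close to `1`, so `∑ Re(λ_jⁿ) ≥ 0`. If `k ≥ 2`, the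
right-hand side `(2 - k)dⁿ - 1` is at most `-1` for this `n`, a contradiction.
-/

open Filter Topology

/-- Cover `G` by finitely many translates of a small neighbourhood of `1`; two powers of `g`
landing in the same translate differ by a power lying in `U`. -/
theorem exists_pow_mem_of_mem_nhds_one {G : Type*} [Group G] [TopologicalSpace G]
    [IsTopologicalGroup G] [CompactSpace G] (g : G) {U : Set G} (hU : U ∈ 𝓝 1) :
    ∃ n, 0 < n ∧ g ^ n ∈ U := by
  obtain ⟨V, hV, hVU⟩ := exists_nhds_split_inv hU
  obtain ⟨s, hs⟩ := compact_covered_by_mul_left_translates isCompact_univ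
    (V := V⁻¹) ⟨1, mem_interior_iff_mem_nhds.2 (inv_mem_nhds_one G hV)⟩
  have hcover : ∀ n : ℕ, ∃ x ∈ s, (x * g ^ n)⁻¹ ∈ V := fun n => by
    simpa using hs (Set.mem_univ (g ^ n))
  choose x hxs hxV using hcover
  obtain ⟨m, n, hmn, hx⟩ := s.finite_toSet.exists_lt_map_eq_of_forall_mem hxs
  refine ⟨n - m, Nat.sub_pos_of_lt hmn, ?_⟩
  have hpow : g ^ (n - m) = (g ^ m)⁻¹ * g ^ n := by
    rw [eq_inv_mul_iff_mul_eq, ← pow_add, Nat.add_sub_cancel' hmn.le]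
  simpa [hx, hpow, mul_assoc] using hVU _ (hxV m) _ (hxV n)

theorem Circle.exists_forall_re_pow_pos {ι : Type*} [Finite ι] (u : ι → Circle) :
    ∃ n, 0 < n ∧ ∀ i, 0 < ((u i ^ n : Circle) : ℂ).re := by
  have hU : {v : ι → Circle | ∀ i, 0 < (v i : ℂ).re} ∈ 𝓝 1 := by
    refine IsOpen.mem_nhds ?_ fun i => by simp
    simp only [Set.ofPred_forall]
    exact isOpen_iInter_of_finite fun i => isOpen_lt continuous_const (by fun_prop)
  exact exists_pow_mem_of_mem_nhds_one u hU

theorem Complex.exists_sum_re_pow_nonneg {ι : Type*} [Fintype ι] (lam : ι → ℂ) :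
    ∃ n, 0 < n ∧ 0 ≤ ∑ i, (lam i ^ n).re := by
  obtain ⟨n, hn, hpos⟩ := Circle.exists_forall_re_pow_pos fun i => Circle.exp (lam i).arg
  refine ⟨n, hn, Finset.sum_nonneg fun i _ => ?_⟩
  rw [← norm_mul_exp_arg_mul_I (lam i), mul_pow, ← ofReal_pow, re_ofReal_mul]
  exact mul_nonneg (by positivity) (hpos i).le

theorem le_one_of_forall_pow_bound_general (d : ℝ) (hd : 0 < d) (k : ℤ) (t : ℕ)
    (lam : Fin t → ℂ)
    (h : ∀ n : ℕ, 1 ≤ n → ∑ j, (lam j ^ n).re ≤ (2 - (k : ℝ)) * d ^ n - 1) :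
    k ≤ 1 := by
  obtain ⟨n, hn, hsum⟩ := Complex.exists_sum_re_pow_nonneg lam
  by_contra! hk
  have hk2 : (2 : ℝ) ≤ k := by exact_mod_cast hk
  nlinarith [h n hn, pow_pos hd n]

/-- If `∑_j Re(λ_j^n) ≤ (2 − k)·d^n − 1` for all `n ≥ 1`, with `d > 0` and the `λ_j`
nonzero complex numbers, then `k ≤ 1`. -/
theorem le_one_of_forall_pow_bound (d : ℝ) (hd : 0 < d) (k : ℤ) (t : ℕ)
    (lam : Fin t → ℂ) (hlam : ∀ j, lam j ≠ 0)
    (h : ∀ n : ℕ, 1 ≤ n → ∑ j, (lam j ^ n).re ≤ (2 - (k : ℝ)) * d ^ n - 1) :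
    k ≤ 1 :=
  le_one_of_forall_pow_bound_general d hd k t lam h
end

section
/- Let k be a field, r, s ≥ 1 and p, q, t ≥ 0 natural numbers, and let X be a p×r matrix over k with rank X = r − 1, Y a q×s matrix over k with rank Y = s − 1, A a t×r matrix and B a t×s matrix over k. Let M be the (p+t+q)×(r+s) block matrix whose first p rows are (X | 0), next t rows are (A | B), and last q rows are (0 | Y). Assume moreover rank M ≤ r + s − 1. Then rank M = r + s − 1 if and only if the stacked matrix [X; A] (X above A) has rank r or the stacked matrix [B; Y] (B above Y) has rank s. -/
/-!
Identify `k^(r ⊕ s)` with `kʳ × kˢ`. The row space of `M` is then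
`(RX × RY) ⊔ span {(Aᵢ, Bᵢ)}`, where `RX`, `RY` are the row spaces of `X`, `Y`, and `RX × RY`
has dimension `r + s - 2`. So `rank M = r + s - 1` exactly when some `(Aᵢ, Bᵢ) ∉ RX × RY`,
i.e. some `Aᵢ ∉ RX` or some `Bᵢ ∉ RY`. Since `RX` is a hyperplane of `kʳ`, some `Aᵢ ∉ RX`
means `rank [X; A] = r`; likewise for `[B; Y]`.
-/

open Module Submodule Set

namespace Submodule

variable {k V W : Type*} [Field k] [AddCommGroup V] [Module k V] [AddCommGroup W] [Module k W]

theorem finrank_prod [FiniteDimensional k V] [FiniteDimensional k W]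
    (p : Submodule k V) (q : Submodule k W) :
    finrank k (p.prod q) = finrank k p + finrank k q := by
  have hinj : Function.Injective (p.subtype.prodMap q.subtype) := by
    rw [← LinearMap.ker_eq_bot, LinearMap.ker_prodMap, ker_subtype, ker_subtype, prod_bot]
  rw [← Module.finrank_prod, ← LinearMap.finrank_range_of_inj hinj, LinearMap.range_prodMap,
    range_subtype, range_subtype]

theorem finrank_lt_finrank_sup_span_range_iff [FiniteDimensional k V] {ι : Type*}
    (U : Submodule k V) (v : ι → V) :
    finrank k U < finrank k ↥(U ⊔ span k (range v)) ↔ ∃ i, v i ∉ U := by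
  constructor
  · intro h
    have := lt_of_le_of_finrank_lt_finrank le_sup_left h
    simpa [left_lt_sup, span_le, range_subset_iff] using this
  · rintro ⟨i, hi⟩
    exact finrank_lt_finrank_of_lt (left_lt_sup.2 fun h => hi (h (subset_span ⟨i, rfl⟩)))

theorem finrank_sup_span_range_eq_iff [FiniteDimensional k V] {ι : Type*}
    {U : Submodule k V} (v : ι → V) {n : ℕ} (hU : finrank k U + 1 = n)
    (hle : finrank k ↥(U ⊔ span k (range v)) ≤ n) :
    finrank k ↥(U ⊔ span k (range v)) = n ↔ ∃ i, v i ∉ U := by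
  rw [← finrank_lt_finrank_sup_span_range_iff]
  omega

end Submodule

namespace Matrix

variable {k l m m' n n' : Type*} [Field k] [Fintype n] [Fintype n'] [Finite m] [Finite m']
  [Finite l]

theorem rank_fromRows (A : Matrix m n k) (B : Matrix m' n k) :
    (fromRows A B).rank = finrank k ↥(span k (range A.row) ⊔ span k (range B.row)) := by
  rw [rank_eq_finrank_span_row, ← span_union, ← Set.Sum.elim_range A.row B.row]
  rfl

theorem rank_fromBlocks_fromRows (X : Matrix m n k) (Y : Matrix m' n' k)
    (A : Matrix l n k) (B : Matrix l n' k) :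
    (fromBlocks X 0 (fromRows A 0) (fromRows B Y)).rank =
      finrank k ↥((span k (range X.row)).prod (span k (range Y.row)) ⊔
        span k (range fun i => (A.row i, B.row i))) := by
  let e := LinearEquiv.sumArrowLequivProdArrow n n' k k
  have hrows : e ∘ (fromBlocks X 0 (fromRows A 0) (fromRows B Y)).row =
      Sum.elim (LinearMap.inl k _ _ ∘ X.row)
        (Sum.elim (fun i => (A.row i, B.row i)) (LinearMap.inr k _ _ ∘ Y.row)) := by
    funext i
    rcases i with i | i | i <;> rfl
  rw [rank_eq_finrank_span_row, ← e.finrank_map_eq, map_span, ← range_comp,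
    LinearEquiv.coe_coe, hrows, Set.Sum.elim_range, Set.Sum.elim_range, span_union, span_union,
    range_comp, range_comp, ← map_span, ← map_span, LinearMap.prod_eq_sup_map,
    sup_comm (span k (range fun i => (A.row i, B.row i))), sup_assoc]

end Matrix

/-- Jacobian rank criterion (equation `rg_max` of Section 2.3): smoothness of a point
of a correspondence on a product of two smooth curves. -/
theorem jacobian_rank_max (k : Type*) [Field k] (r s p q t : ℕ) (hr : 1 ≤ r) (hs : 1 ≤ s)
    (X : Matrix (Fin p) (Fin r) k) (Y : Matrix (Fin q) (Fin s) k)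
    (A : Matrix (Fin t) (Fin r) k) (B : Matrix (Fin t) (Fin s) k)
    (hX : X.rank = r - 1) (hY : Y.rank = s - 1)
    (M : Matrix (Fin p ⊕ (Fin t ⊕ Fin q)) (Fin r ⊕ Fin s) k)
    (hM : M = Matrix.fromBlocks X 0 (Matrix.fromRows A 0) (Matrix.fromRows B Y))
    (hMle : M.rank ≤ r + s - 1) :
    M.rank = r + s - 1 ↔
      (Matrix.fromRows X A).rank = r ∨ (Matrix.fromRows B Y).rank = s := by
  rw [Matrix.rank_eq_finrank_span_row] at hX hY
  have hXA := (Matrix.fromRows X A).rank_le_card_width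
  have hBY := (Matrix.fromRows B Y).rank_le_card_width
  rw [Fintype.card_fin, Matrix.rank_fromRows] at hXA hBY
  rw [Matrix.rank_fromRows, Matrix.rank_fromRows]
  rw [sup_comm (span k (range B.row))] at hBY ⊢
  rw [hM, Matrix.rank_fromBlocks_fromRows] at hMle ⊢
  rw [finrank_sup_span_range_eq_iff _ (by rw [Submodule.finrank_prod, hX, hY]; omega) hMle,
    finrank_sup_span_range_eq_iff _ (by omega) hXA, finrank_sup_span_range_eq_iff _ (by omega) hBY]
  simp only [Submodule.mem_prod, not_and_or, exists_or]
end

section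
/- Let S be a finite type, d > 0 a real number, and A a square matrix over ℝ indexed by S with nonnegative entries, such that every row sum ∑_{Q∈S} A P Q is at most d and every column sum ∑_{P∈S} A P Q is at most d. Suppose u : S → ℝ is nonnegative, not identically zero, and satisfies ∑_{Q∈S} A P Q · u Q = d · u P for every P ∈ S. Let Σ = {P ∈ S | u P > 0}. Then Σ is nonempty and: (a) for every P ∈ Σ, ∑_{Q∈Σ} A P Q = d; (b) for every Q ∈ Σ, ∑_{P∈Σ} A P Q = d; (c) A P Q = 0 whenever exactly one of P, Q belongs to Σ. -/
/-!
Let `Σ` be the support of `u`. For `P ∉ Σ` the eigen-equation reads `0 = ∑ Q, A P Q * u Q`, a sum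
of nonnegative terms, so `A P Q = 0` whenever `Q ∈ Σ`. Summing the eigen-equation over all `P`
gives `∑ Q, (∑ P, A P Q) * u Q = d * ∑ Q, u Q`; since every column sum is at most `d`, the column
sums at `Q ∈ Σ` equal `d`, and by the first step these are sums over `Σ`. Double counting the
`Σ × Σ` block then forces its row sums, which are at most `d`, to equal `d` as well, and a row
sum over `Σ` that already reaches the bound `d` leaves no room for entries outside `Σ`.
-/

open Finset

section

variable {ι R : Type*}

theorem Finset.eq_zero_of_sum_le_sum_of_nonneg [Fintype ι] [AddCommMonoid R] [LinearOrder R]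
    [IsOrderedCancelAddMonoid R] {s : Finset ι} {f : ι → R} (hf : ∀ i, 0 ≤ f i)
    (h : ∑ i, f i ≤ ∑ i ∈ s, f i) {i : ι} (hi : i ∉ s) : f i = 0 :=
  (hf i).eq_of_not_lt' fun hpos =>
    (sum_lt_sum_of_subset (subset_univ s) (mem_univ i) hi hpos fun j _ _ => hf j).not_ge h

namespace Matrix

theorem rowSum_eq_of_colSum_eq [AddCommMonoid R] [PartialOrder R] [IsOrderedCancelAddMonoid R]
    {A : Matrix ι ι R} {d : R} {s : Finset ι} (hrow : ∀ i ∈ s, ∑ j ∈ s, A i j ≤ d)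
    (hcol : ∀ j ∈ s, ∑ i ∈ s, A i j = d) : ∀ i ∈ s, ∑ j ∈ s, A i j = d :=
  (sum_eq_sum_iff_of_le hrow).mp (sum_comm.trans (sum_congr rfl hcol))

variable [Fintype ι] [Semiring R] [LinearOrder R] [IsStrictOrderedRing R]
  {A : Matrix ι ι R} {u : ι → R} {d : R}

theorem entry_eq_zero_of_nonneg_eigenvector (hA : ∀ i j, 0 ≤ A i j) (hu : ∀ i, 0 ≤ u i)
    (heig : ∀ i, ∑ j, A i j * u j = d * u i) {i j : ι} (hi : u i = 0) (hj : 0 < u j) :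
    A i j = 0 := by
  have hterm : A i j * u j = 0 := by
    refine (sum_eq_zero_iff_of_nonneg fun k _ => mul_nonneg (hA i k) (hu k)).mp ?_ j (mem_univ j)
    rw [heig i, hi, mul_zero]
  exact (hA i j).eq_of_not_lt' fun hpos => (mul_pos hpos hj).ne' hterm

theorem colSum_eq_of_nonneg_eigenvector (hu : ∀ i, 0 ≤ u i) (hcol : ∀ j, ∑ i, A i j ≤ d)
    (heig : ∀ i, ∑ j, A i j * u j = d * u i) {j : ι} (hj : 0 < u j) : ∑ i, A i j = d := by
  have hle : ∀ k ∈ univ, (∑ i, A i k) * u k ≤ d * u k :=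
    fun k _ => mul_le_mul_of_nonneg_right (hcol k) (hu k)
  have hsum : ∑ k, (∑ i, A i k) * u k = ∑ k, d * u k := by
    simp_rw [sum_mul, ← heig]
    exact sum_comm
  have hterm := (sum_eq_sum_iff_of_le hle).mp hsum j (mem_univ j)
  exact (hcol j).antisymm (le_of_mul_le_mul_right hterm.ge hj)

end Matrix

end

theorem support_of_nonneg_eigenvector_general (S : Type*) [Fintype S] (d : ℝ)
    (A : Matrix S S ℝ) (hA : ∀ P Q, 0 ≤ A P Q)
    (hrow : ∀ P, ∑ Q, A P Q ≤ d) (hcol : ∀ Q, ∑ P, A P Q ≤ d)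
    (u : S → ℝ) (hu0 : ∀ P, 0 ≤ u P) (hune : u ≠ 0)
    (heig : ∀ P, ∑ Q, A P Q * u Q = d * u P)
    (Sig : Finset S) (hSig : Sig = Finset.univ.filter fun P => 0 < u P) :
    Sig.Nonempty ∧
    (∀ P ∈ Sig, ∑ Q ∈ Sig, A P Q = d) ∧
    (∀ Q ∈ Sig, ∑ P ∈ Sig, A P Q = d) ∧
    (∀ P Q, Xor' (P ∈ Sig) (Q ∈ Sig) → A P Q = 0) := by
  have hmem : ∀ P, P ∈ Sig ↔ 0 < u P := by simp [hSig]
  have hzero : ∀ P, P ∉ Sig → u P = 0 := fun P hP =>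
    (not_lt.mp fun hpos => hP ((hmem P).mpr hpos)).antisymm (hu0 P)
  have hne : Sig.Nonempty := by
    by_contra hempty
    exact hune (funext fun P => hzero P fun hP => hempty ⟨P, hP⟩)
  have hin : ∀ P Q, P ∉ Sig → Q ∈ Sig → A P Q = 0 := fun P Q hP hQ =>
    Matrix.entry_eq_zero_of_nonneg_eigenvector hA hu0 heig (hzero P hP) ((hmem Q).mp hQ)
  have hcolSig : ∀ Q ∈ Sig, ∑ P ∈ Sig, A P Q = d := fun Q hQ => by
    rw [sum_subset (subset_univ Sig) fun P _ hP => hin P Q hP hQ]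
    exact Matrix.colSum_eq_of_nonneg_eigenvector hu0 hcol heig ((hmem Q).mp hQ)
  have hrowSig : ∀ P ∈ Sig, ∑ Q ∈ Sig, A P Q = d :=
    Matrix.rowSum_eq_of_colSum_eq (fun P _ => (sum_le_univ_sum_of_nonneg (hA P)).trans (hrow P))
      hcolSig
  refine ⟨hne, hrowSig, hcolSig, fun P Q hxor => ?_⟩
  rcases hxor with ⟨hP, hQ⟩ | ⟨hQ, hP⟩
  · exact eq_zero_of_sum_le_sum_of_nonneg (hA P) ((hrow P).trans (hrowSig P hP).ge) hQ
  · exact hin P Q hP hQ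

/-- Key matrix-theoretic step in the proof of Proposition 4.5: the support `Σ` of a
nonnegative eigenvector for the eigenvalue `d` of a nonnegative matrix with row and
column sums at most `d` carries a `d`-regular complete subgraph. -/
theorem support_of_nonneg_eigenvector (S : Type*) [Fintype S] (d : ℝ) (hd : 0 < d)
    (A : Matrix S S ℝ) (hA : ∀ P Q, 0 ≤ A P Q)
    (hrow : ∀ P, ∑ Q, A P Q ≤ d) (hcol : ∀ Q, ∑ P, A P Q ≤ d)
    (u : S → ℝ) (hu0 : ∀ P, 0 ≤ u P) (hune : u ≠ 0)
    (heig : ∀ P, ∑ Q, A P Q * u Q = d * u P)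
    (Sig : Finset S) (hSig : Sig = Finset.univ.filter fun P => 0 < u P) :
    Sig.Nonempty ∧
    (∀ P ∈ Sig, ∑ Q ∈ Sig, A P Q = d) ∧
    (∀ Q ∈ Sig, ∑ P ∈ Sig, A P Q = d) ∧
    (∀ P Q, Xor' (P ∈ Sig) (Q ∈ Sig) → A P Q = 0) :=
  support_of_nonneg_eigenvector_general S d A hA hrow hcol u hu0 hune heig Sig hSig
end

section
/- Let S be a nonempty finite type, d > 0 a real number, and A a square matrix over ℝ indexed by S with nonnegative entries, such that every row sum ∑_{Q∈S} A P Q is at most d and every column sum ∑_{P∈S} A P Q is at most d. Then the spectral radius of A equals d if and only if there exists a nonempty subset Σ ⊆ S such that the principal submatrix (A P Q)_{P,Q∈Σ} has all its row sums and all its column sums equal to d. -/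
/-!
Let `v` be an eigenvector of `A` for the eigenvalue `μ` and let `Σ` be the set of entries where
`|v|` is maximal. At `P ∈ Σ`, `|μ| |v_P| ≤ ∑_Q A_PQ |v_Q| ≤ d |v_P|`, so `|μ| ≤ d`, and when
`|μ| = d` every inequality is an equality: the row of `P` sums to `d` and is supported on `Σ`.
Summing these rows, the column sums over `Σ`, each at most `d`, add up to `d |Σ|`, so they all
equal `d`. Conversely, if `Σ` is `d`-regular, the column bounds force `A_PQ = 0` for `P ∉ Σ`,
`Q ∈ Σ`, so the indicator of `Σ` is an eigenvector for `d`.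
-/

open Finset Matrix Polynomial

/-- The spectral radius of a real square matrix: the maximum of the moduli of the
complex roots of its characteristic polynomial (`0` if there are none). -/
noncomputable def specRad {S : Type*} [Fintype S] [DecidableEq S]
    (A : Matrix S S ℝ) : ℝ :=
  (((A.map (Complex.ofReal)).charpoly.roots).map (fun z : ℂ => ‖z‖)).foldr max 0

namespace Multiset

variable {α : Type*} [LinearOrder α]

theorem foldr_max_le_iff {s : Multiset α} {a c : α} :
    s.foldr max a ≤ c ↔ a ≤ c ∧ ∀ x ∈ s, x ≤ c := by
  induction s using Multiset.induction with
  | empty => simp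
  | cons b t ih => simp [foldr_cons, ih, and_left_comm]

theorem foldr_max_eq_or_mem (s : Multiset α) (a : α) : s.foldr max a = a ∨ s.foldr max a ∈ s := by
  induction s using Multiset.induction with
  | empty => simp
  | cons b t ih =>
    rw [foldr_cons]
    rcases max_choice b (t.foldr max a) with h | h <;> rw [h]
    · simp
    · rcases ih with ih | ih <;> simp [ih]

theorem foldr_max_eq_iff {s : Multiset α} {a c : α} (hac : a < c) :
    s.foldr max a = c ↔ c ∈ s ∧ ∀ x ∈ s, x ≤ c := by
  constructor
  · rintro rfl
    exact ⟨(foldr_max_eq_or_mem s a).resolve_left hac.ne', (foldr_max_le_iff.mp le_rfl).2⟩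
  · rintro ⟨hc, hle⟩
    exact le_antisymm (foldr_max_le_iff.mpr ⟨hac.le, hle⟩) ((foldr_max_le_iff.mp le_rfl).2 c hc)

end Multiset

theorem exists_pos_forall_norm_le {ι E : Type*} [Finite ι] [NormedAddCommGroup E] {v : ι → E}
    (hv : v ≠ 0) : ∃ i₀, 0 < ‖v i₀‖ ∧ ∀ i, ‖v i‖ ≤ ‖v i₀‖ := by
  obtain ⟨i, hi⟩ := Function.ne_iff.1 hv
  have : Nonempty ι := ⟨i⟩
  obtain ⟨i₀, hmax⟩ := Finite.exists_max (‖v ·‖)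
  exact ⟨i₀, (norm_pos_iff.2 hi).trans_le (hmax i), hmax⟩

namespace Matrix

theorem mem_roots_charpoly_iff {K S : Type*} [Field K] [Fintype S] [DecidableEq S]
    (M : Matrix S S K) (μ : K) : μ ∈ M.charpoly.roots ↔ ∃ v ≠ 0, M *ᵥ v = μ • v := by
  rw [mem_roots M.charpoly_monic.ne_zero, ← charpoly_toLin',
    ← Module.End.hasEigenvalue_iff_isRoot_charpoly, Module.End.hasEigenvalue_iff,
    Submodule.ne_bot_iff]
  simp [and_comm]

variable {S : Type*} [Fintype S] {A : Matrix S S ℝ} {d : ℝ}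

theorem sum_mul_le_mul_of_le (hA : ∀ P Q, 0 ≤ A P Q) (hrow : ∀ P, ∑ Q, A P Q ≤ d)
    {u : S → ℝ} {m : ℝ} (hu : ∀ Q, u Q ≤ m) (hm : 0 ≤ m) (P : S) :
    ∑ Q, A P Q * u Q ≤ d * m :=
  calc ∑ Q, A P Q * u Q ≤ ∑ Q, A P Q * m := by gcongr with Q; exacts [hA P Q, hu Q]
    _ = (∑ Q, A P Q) * m := by rw [sum_mul]
    _ ≤ d * m := by gcongr; exact hrow P

theorem sum_filter_eq_of_mul_le_sum_mul (hA : ∀ P Q, 0 ≤ A P Q) (hrow : ∀ P, ∑ Q, A P Q ≤ d)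
    {u : S → ℝ} {m : ℝ} (hu : ∀ Q, u Q ≤ m) (hm : 0 < m) {P : S}
    (hP : d * m ≤ ∑ Q, A P Q * u Q) : ∑ Q with u Q = m, A P Q = d := by
  have hdefect : ∑ Q, A P Q * (m - u Q) = (∑ Q, A P Q) * m - ∑ Q, A P Q * u Q := by
    simp only [mul_sub, sum_sub_distrib, sum_mul]
  have hterm : ∀ Q, 0 ≤ A P Q * (m - u Q) := fun Q => mul_nonneg (hA P Q) (sub_nonneg.2 (hu Q))
  have hrowP : ∑ Q, A P Q = d := by
    refine le_antisymm (hrow P) (le_of_mul_le_mul_right ?_ hm)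
    linarith [sum_nonneg fun Q (_ : Q ∈ univ) => hterm Q]
  have hzero : ∑ Q, A P Q * (m - u Q) = 0 := by
    refine le_antisymm ?_ (sum_nonneg fun Q _ => hterm Q)
    rw [hdefect, hrowP]
    linarith
  rw [sum_filter_of_ne, hrowP]
  intro Q _ hQ
  have := (sum_eq_zero_iff_of_nonneg fun Q _ => hterm Q).1 hzero Q (mem_univ Q)
  linarith [(mul_eq_zero.1 this).resolve_left hQ]

theorem sum_col_eq_of_sum_row_eq (hA : ∀ P Q, 0 ≤ A P Q) (hcol : ∀ Q, ∑ P, A P Q ≤ d)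
    {Sig : Finset S} (hrows : ∀ P ∈ Sig, ∑ Q ∈ Sig, A P Q = d) :
    ∀ Q ∈ Sig, ∑ P ∈ Sig, A P Q = d := by
  have hle : ∀ Q ∈ Sig, ∑ P ∈ Sig, A P Q ≤ d := fun Q _ =>
    (sum_le_sum_of_subset_of_nonneg (subset_univ Sig) fun P _ _ => hA P Q).trans (hcol Q)
  refine (sum_eq_sum_iff_of_le hle).1 ?_
  rw [sum_comm, sum_congr rfl hrows]

theorem eq_zero_of_sum_col_eq (hA : ∀ P Q, 0 ≤ A P Q) (hcol : ∀ Q, ∑ P, A P Q ≤ d)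
    {Sig : Finset S} (hcols : ∀ Q ∈ Sig, ∑ P ∈ Sig, A P Q = d) {P Q : S} (hP : P ∉ Sig)
    (hQ : Q ∈ Sig) : A P Q = 0 := by
  by_contra hPQ
  have := sum_lt_sum_of_subset (subset_univ Sig) (mem_univ P) hP
    ((hA P Q).lt_of_ne (Ne.symm hPQ)) fun P' _ _ => hA P' Q
  linarith [hcol Q, hcols Q hQ]

theorem mulVec_indicator_eq_smul [DecidableEq S] (hA : ∀ P Q, 0 ≤ A P Q)
    (hcol : ∀ Q, ∑ P, A P Q ≤ d) {Sig : Finset S} (hrows : ∀ P ∈ Sig, ∑ Q ∈ Sig, A P Q = d)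
    (hcols : ∀ Q ∈ Sig, ∑ P ∈ Sig, A P Q = d) :
    A *ᵥ (fun P => if P ∈ Sig then 1 else 0) = d • fun P => if P ∈ Sig then 1 else 0 := by
  ext P
  simp only [mulVec, dotProduct, mul_ite, mul_one, mul_zero, sum_ite_mem, univ_inter,
    Pi.smul_apply, smul_eq_mul]
  by_cases hP : P ∈ Sig
  · simp [hP, hrows P hP]
  · simp [hP, sum_eq_zero fun Q hQ => eq_zero_of_sum_col_eq hA hcol hcols hP hQ]

theorem norm_mul_norm_le_sum_mul_norm (hA : ∀ P Q, 0 ≤ A P Q) {μ : ℂ} {v : S → ℂ}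
    (heig : A.map Complex.ofReal *ᵥ v = μ • v) (P : S) :
    ‖μ‖ * ‖v P‖ ≤ ∑ Q, A P Q * ‖v Q‖ :=
  calc ‖μ‖ * ‖v P‖ = ‖∑ Q, (A P Q : ℂ) * v Q‖ := by
        rw [← norm_mul, ← smul_eq_mul, ← Pi.smul_apply, ← heig]; rfl
    _ ≤ ∑ Q, ‖(A P Q : ℂ) * v Q‖ := norm_sum_le _ _
    _ = ∑ Q, A P Q * ‖v Q‖ := by
        simp only [norm_mul, Complex.norm_real, Real.norm_of_nonneg (hA P _)]

theorem norm_le_of_mulVec_eq_smul (hA : ∀ P Q, 0 ≤ A P Q) (hrow : ∀ P, ∑ Q, A P Q ≤ d)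
    {μ : ℂ} {v : S → ℂ} (hv : v ≠ 0) (heig : A.map Complex.ofReal *ᵥ v = μ • v) : ‖μ‖ ≤ d := by
  obtain ⟨P₀, hpos, hmax⟩ := exists_pos_forall_norm_le hv
  exact le_of_mul_le_mul_right ((norm_mul_norm_le_sum_mul_norm hA heig P₀).trans
    (sum_mul_le_mul_of_le hA hrow hmax hpos.le P₀)) hpos

theorem exists_sum_row_eq_of_norm_eq (hA : ∀ P Q, 0 ≤ A P Q) (hrow : ∀ P, ∑ Q, A P Q ≤ d)
    {μ : ℂ} {v : S → ℂ} (hv : v ≠ 0) (heig : A.map Complex.ofReal *ᵥ v = μ • v)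
    (hμ : ‖μ‖ = d) : ∃ Sig : Finset S, Sig.Nonempty ∧ ∀ P ∈ Sig, ∑ Q ∈ Sig, A P Q = d := by
  obtain ⟨P₀, hpos, hmax⟩ := exists_pos_forall_norm_le hv
  refine ⟨({P | ‖v P‖ = ‖v P₀‖} : Finset S), ⟨P₀, by simp⟩, fun P hP => ?_⟩
  refine sum_filter_eq_of_mul_le_sum_mul hA hrow hmax hpos ?_
  rw [← hμ, ← (mem_filter.1 hP).2]
  exact norm_mul_norm_le_sum_mul_norm hA heig P

end Matrix

theorem specRad_eq_iff_exists_regular_subset_general (S : Type*) [Fintype S] [DecidableEq S]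
    (d : ℝ) (hd : 0 < d) (A : Matrix S S ℝ) (hA : ∀ P Q, 0 ≤ A P Q)
    (hrow : ∀ P, ∑ Q, A P Q ≤ d) (hcol : ∀ Q, ∑ P, A P Q ≤ d) :
    specRad A = d ↔
      ∃ Sig : Finset S, Sig.Nonempty ∧
        (∀ P ∈ Sig, ∑ Q ∈ Sig, A P Q = d) ∧
        (∀ Q ∈ Sig, ∑ P ∈ Sig, A P Q = d) := by
  have hbound : ∀ x ∈ (A.map Complex.ofReal).charpoly.roots.map (‖·‖), x ≤ d := by
    simp only [Multiset.mem_map, forall_exists_index, and_imp, forall_apply_eq_imp_iff₂]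
    intro μ hμ
    obtain ⟨v, hv, heig⟩ := (mem_roots_charpoly_iff _ μ).1 hμ
    exact norm_le_of_mulVec_eq_smul hA hrow hv heig
  rw [specRad, Multiset.foldr_max_eq_iff hd, and_iff_left hbound, Multiset.mem_map]
  constructor
  · rintro ⟨μ, hμ, hμd⟩
    obtain ⟨v, hv, heig⟩ := (mem_roots_charpoly_iff _ μ).1 hμ
    obtain ⟨Sig, hne, hrows⟩ := exists_sum_row_eq_of_norm_eq hA hrow hv heig hμd
    exact ⟨Sig, hne, hrows, sum_col_eq_of_sum_row_eq hA hcol hrows⟩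
  · rintro ⟨Sig, ⟨P, hP⟩, hrows, hcols⟩
    set w : S → ℝ := fun P => if P ∈ Sig then 1 else 0
    have hw := mulVec_indicator_eq_smul hA hcol hrows hcols
    refine ⟨d, (mem_roots_charpoly_iff _ _).2 ⟨Complex.ofReal ∘ w, ?_, ?_⟩, by simp [hd.le]⟩
    · exact Function.ne_iff.2 ⟨P, by simp [w, hP]⟩
    · ext Q
      calc _ = Complex.ofRealHom ((A *ᵥ w) Q) := (RingHom.map_mulVec _ A w Q).symm
        _ = _ := by simp [w, hw, apply_ite Complex.ofReal]

/-- Matrix-theoretic content of the equivalence (1) ⟺ (2) of Proposition 4.5. -/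
theorem specRad_eq_iff_exists_regular_subset (S : Type*) [Fintype S] [DecidableEq S]
    [Nonempty S] (d : ℝ) (hd : 0 < d) (A : Matrix S S ℝ) (hA : ∀ P Q, 0 ≤ A P Q)
    (hrow : ∀ P, ∑ Q, A P Q ≤ d) (hcol : ∀ Q, ∑ P, A P Q ≤ d) :
    specRad A = d ↔
      ∃ Sig : Finset S, Sig.Nonempty ∧
        (∀ P ∈ Sig, ∑ Q ∈ Sig, A P Q = d) ∧
        (∀ Q ∈ Sig, ∑ P ∈ Sig, A P Q = d) :=
  specRad_eq_iff_exists_regular_subset_general S d hd A hA hrow hcol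
end

section
/- Let S be a nonempty finite type, A a square matrix over ℝ indexed by S with nonnegative entries, and d > 0, c > 0 real numbers. If (∑_{P,Q∈S} (A^n) P Q)/d^n tends to c as n → ∞, then the spectral radius of A equals d. -/
/-!
Gelfand's formula computes the spectral radius of a complex matrix `B` as the limit of
`‖B ^ n‖ ^ (1 / n)` for any submultiplicative norm. For the `ℓ∞`-operator norm, `‖B ^ n‖` is
comparable to the sum of the moduli of the entries of `B ^ n`. When `B` is the
complexification of the nonnegative matrix `A`, this is the sum of the entries of `A ^ n`,
which is of order `d ^ n`, so the spectral radius is `d`. It agrees with `specRad A`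
because the spectrum of a complex matrix is the set of roots of its characteristic polynomial.
-/

open Filter Topology Asymptotics

theorem tendsto_const_rpow_one_div_natCast {b : ℝ} (hb : 0 < b) :
    Tendsto (fun n : ℕ => b ^ (1 / (n : ℝ))) atTop (𝓝 1) := by
  simpa [Function.comp_def] using ((Real.continuousAt_const_rpow hb.ne').tendsto.comp
    (tendsto_const_div_atTop_nhds_zero_nat (1 : ℝ)))

theorem tendsto_norm_rpow_one_div_of_isTheta {E : Type*} [SeminormedAddCommGroup E]
    {u : ℕ → E} {d : ℝ} (hd : 0 < d) (hu : u =Θ[atTop] (d ^ ·)) :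
    Tendsto (fun n => ‖u n‖ ^ (1 / (n : ℝ))) atTop (𝓝 d) := by
  obtain ⟨b, hb, hub⟩ := hu.isBigO.exists_pos
  obtain ⟨a, ha, hlb⟩ := hu.isBigO_symm.exists_pos
  have root_pow : ∀ {n : ℕ}, n ≠ 0 → (d ^ n) ^ (1 / (n : ℝ)) = d := fun hn => by
    rw [one_div, Real.pow_rpow_inv_natCast hd.le hn]
  refine tendsto_of_tendsto_of_tendsto_of_le_of_le'
    (by simpa only [one_mul] using
      (tendsto_const_rpow_one_div_natCast (inv_pos.2 ha)).mul_const d)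
    (by simpa only [one_mul] using (tendsto_const_rpow_one_div_natCast hb).mul_const d) ?_ ?_
  · filter_upwards [hlb.bound, eventually_ne_atTop 0] with n hn hn0
    rw [Real.norm_of_nonneg (pow_nonneg hd.le n), ← inv_mul_le_iff₀ ha] at hn
    calc a⁻¹ ^ (1 / (n : ℝ)) * d = (a⁻¹ * d ^ n) ^ (1 / (n : ℝ)) := by
          rw [Real.mul_rpow (by positivity) (by positivity), root_pow hn0]
      _ ≤ ‖u n‖ ^ (1 / (n : ℝ)) := by gcongr
  · filter_upwards [hub.bound, eventually_ne_atTop 0] with n hn hn0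
    rw [Real.norm_of_nonneg (pow_nonneg hd.le n)] at hn
    calc ‖u n‖ ^ (1 / (n : ℝ)) ≤ (b * d ^ n) ^ (1 / (n : ℝ)) := by gcongr
      _ = b ^ (1 / (n : ℝ)) * d := by
          rw [Real.mul_rpow hb.le (by positivity), root_pow hn0]

theorem spectralRadius_eq_of_isTheta {A : Type*} [NormedRing A] [NormedAlgebra ℂ A]
    [CompleteSpace A] {a : A} {d : ℝ} (hd : 0 < d) (ha : (a ^ ·) =Θ[atTop] (d ^ ·)) :
    spectralRadius ℂ a = ENNReal.ofReal d :=
  tendsto_nhds_unique (spectrum.pow_norm_pow_one_div_tendsto_nhds_spectralRadius a)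
    ((ENNReal.continuous_ofReal.tendsto d).comp (tendsto_norm_rpow_one_div_of_isTheta hd ha))

theorem ENNReal.ofReal_foldr_max_map {α : Type*} (f : α → ℝ) (m : Multiset α) :
    ENNReal.ofReal ((m.map f).foldr max 0) = ⨆ x ∈ m, ENNReal.ofReal (f x) := by
  induction m using Multiset.induction with
  | empty => simp
  | cons a s ih =>
    simp [Multiset.mem_cons, iSup_or, iSup_sup_eq, ENNReal.ofReal_max, ih]

theorem specRad_nonneg {S : Type*} [Fintype S] [DecidableEq S] (A : Matrix S S ℝ) :
    0 ≤ specRad A := by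
  unfold specRad
  induction (A.map Complex.ofReal).charpoly.roots using Multiset.induction with
  | empty => simp
  | cons a s ih => simp [ih]

theorem ofReal_specRad {S : Type*} [Fintype S] [DecidableEq S] (A : Matrix S S ℝ) :
    ENNReal.ofReal (specRad A) = spectralRadius ℂ (A.map Complex.ofReal) := by
  have hspec : ∀ μ, μ ∈ spectrum ℂ (A.map Complex.ofReal) ↔
      μ ∈ (A.map Complex.ofReal).charpoly.roots := fun μ => by
    rw [Matrix.mem_spectrum_iff_isRoot_charpoly,
      Polynomial.mem_roots (Matrix.charpoly_monic _).ne_zero]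
  simp only [specRad, spectralRadius, ENNReal.ofReal_foldr_max_map, hspec, ofReal_norm,
    enorm_eq_nnnorm]

namespace Matrix

attribute [local instance] Matrix.linftyOpSeminormedAddCommGroup

variable {m n α : Type*} [Fintype m] [Fintype n] [SeminormedAddCommGroup α]

theorem linfty_opNorm_le_sum_norm (A : Matrix m n α) : ‖A‖ ≤ ∑ i, ∑ j, ‖A i j‖ := by
  have h : ‖A‖₊ ≤ ∑ i, ∑ j, ‖A i j‖₊ := by
    rw [linfty_opNNNorm_def]
    exact Finset.sup_le fun i _ =>
      Finset.single_le_sum (f := fun i => ∑ j, ‖A i j‖₊) (fun _ _ => zero_le)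
        (Finset.mem_univ i)
  simpa only [← coe_nnnorm, ← NNReal.coe_sum, ← NNReal.coe_natCast, ← NNReal.coe_mul,
    NNReal.coe_le_coe] using h

theorem sum_norm_le_card_mul_linfty_opNorm (A : Matrix m n α) :
    ∑ i, ∑ j, ‖A i j‖ ≤ Fintype.card m * ‖A‖ := by
  have h : ∑ i, ∑ j, ‖A i j‖₊ ≤ Fintype.card m • ‖A‖₊ := by
    rw [linfty_opNNNorm_def]
    exact Finset.sum_le_card_nsmul _ _ _ fun i _ =>
      Finset.le_sup (f := fun i => ∑ j, ‖A i j‖₊) (Finset.mem_univ i)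
  rw [nsmul_eq_mul] at h
  simpa only [← coe_nnnorm, ← NNReal.coe_sum, ← NNReal.coe_natCast, ← NNReal.coe_mul,
    NNReal.coe_le_coe] using h

theorem isTheta_sum_norm_linfty {ι : Type*} (l : Filter ι) (f : ι → Matrix m n α) :
    f =Θ[l] fun x => ∑ i, ∑ j, ‖f x i j‖ := by
  have hsum : ∀ x, ‖∑ i, ∑ j, ‖f x i j‖‖ = ∑ i, ∑ j, ‖f x i j‖ := fun x =>
    Real.norm_of_nonneg (by positivity)
  refine ⟨.of_bound 1 (.of_forall fun x => ?_),
    .of_bound (Fintype.card m) (.of_forall fun x => ?_)⟩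
  · simpa [hsum] using linfty_opNorm_le_sum_norm (f x)
  · simpa [hsum] using sum_norm_le_card_mul_linfty_opNorm (f x)

theorem spectralRadius_eq_of_isTheta_sum_norm [DecidableEq m] {B : Matrix m m ℂ} {d : ℝ}
    (hd : 0 < d)
    (hB : (fun n : ℕ => ∑ i, ∑ j, ‖(B ^ n) i j‖) =Θ[atTop] (d ^ ·)) :
    spectralRadius ℂ B = ENNReal.ofReal d := by
  let : NormedRing (Matrix m m ℂ) := Matrix.linftyOpNormedRing
  let : NormedAlgebra ℂ (Matrix m m ℂ) := Matrix.linftyOpNormedAlgebra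
  have : CompleteSpace (Matrix m m ℂ) := FiniteDimensional.complete ℂ _
  exact spectralRadius_eq_of_isTheta hd ((isTheta_sum_norm_linfty atTop (B ^ ·)).trans hB)

end Matrix

theorem specRad_eq_of_entries_growth_general (S : Type*) [Fintype S] [DecidableEq S]
    (A : Matrix S S ℝ) (hA : ∀ P Q, 0 ≤ A P Q)
    (d c : ℝ) (hd : 0 < d) (hc : 0 < c)
    (h : Tendsto (fun n : ℕ => (∑ P, ∑ Q, (A ^ n) P Q) / d ^ n) atTop (nhds c)) :
    specRad A = d := by
  have hsum :
      ∀ n : ℕ, ∑ P, ∑ Q, ‖(A.map Complex.ofReal ^ n) P Q‖ = ∑ P, ∑ Q, (A ^ n) P Q := by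
    intro n
    have hentry : ∀ P Q, (A.map Complex.ofReal ^ n) P Q = ((A ^ n) P Q : ℂ) :=
      Matrix.ext_iff.2 (Matrix.map_pow A Complex.ofRealHom n).symm
    simp only [hentry, Complex.norm_real, Real.norm_of_nonneg (Matrix.pow_apply_nonneg hA n _ _)]
  have hgrowth := (isTheta_of_div_tendsto_nhds_ne_zero h hc.ne').symm
  rw [← ENNReal.ofReal_eq_ofReal_iff (specRad_nonneg A) hd.le, ofReal_specRad,
    Matrix.spectralRadius_eq_of_isTheta_sum_norm hd (by simpa only [hsum] using hgrowth)]

/-- Implication (3) ⟹ (1) of Proposition 4.5: if the sum of the entries of `A ^ n`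
grows like `c · d ^ n` with `c > 0`, then the spectral radius of the nonnegative
matrix `A` equals `d`. -/
theorem specRad_eq_of_entries_growth (S : Type*) [Fintype S] [DecidableEq S]
    [Nonempty S] (A : Matrix S S ℝ) (hA : ∀ P Q, 0 ≤ A P Q)
    (d c : ℝ) (hd : 0 < d) (hc : 0 < c)
    (h : Tendsto (fun n : ℕ => (∑ P, ∑ Q, (A ^ n) P Q) / d ^ n) atTop (nhds c)) :
    specRad A = d :=
  specRad_eq_of_entries_growth_general S A hA d c hd hc h
end
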